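/- arXiv:2212.11780 — 2 statements merged into one kernel-verified Lean document; each statement's English description precedes it below -/
import Mathlib

section
/- Let F be a free group with a basis containing two distinct elements e₁ and e₂. Then for all x, y ∈ F: (x = 1 or y = 1) if and only if all four commutators [xᵃ, yᵇ] for a ∈ {e₁, e₁⁻¹} and b ∈ {e₂, e₂⁻¹} are trivial, where xᵃ denotes the conjugate a⁻¹xa and [u,v] = u⁻¹v⁻¹uv. -/
/-!
Free groups are commutative-transitive: by Nielsen–Schreier the centralizer of `g ≠ 1` is a free
group with `g` in its centre, and a free group with non-trivial centre has at most one generator,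
so the centralizer is infinite cyclic. Moreover a free group is CSA: if `g w g⁻¹` commutes with
`w ≠ 1`, conjugation by `g` is an automorphism of the infinite cyclic centralizer of `w`, hence
`z ↦ z^{±1}` on it, so `g²` and therefore `g` commute with `w`.

Now let `x, y ≠ 1` satisfy the four commutator equations, and write `a = e₁`, `b = e₂`. The
conjugates `xᵃ` and `x^{a⁻¹} = a² xᵃ a⁻²` both commute with `yᵇ ≠ 1`, hence with each other, so
`a²` commutes with `xᵃ`; likewise `b²` commutes with `yᵇ`. Chaining through `xᵃ` and `yᵇ`, `a²`
commutes with `b²`, hence `a` with `b`, which is false for distinct basis elements.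
-/

open Subgroup

namespace FreeGroup

variable {α : Type*}

theorem toWord_mk_singleton_mul [DecidableEq α] {x : α × Bool} {c : FreeGroup α}
    (hc : c.toWord.head? ≠ some (x.1, !x.2)) : (mk [x] * c).toWord = x :: c.toWord := by
  have hred : IsReduced (x :: c.toWord) := by
    rcases hL : c.toWord with _ | ⟨y, L⟩
    · exact .singleton
    rw [hL] at hc
    refine isReduced_cons_cons.2 ⟨fun h₁ => ?_, hL ▸ isReduced_toWord⟩
    obtain ⟨y₁, y₂⟩ := y
    obtain ⟨x₁, x₂⟩ := x
    cases x₂ <;> cases y₂ <;> simp_all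
  conv_lhs => rw [← mk_toWord (x := c), mul_mk]
  rw [toWord_mk, List.singleton_append, hred.reduce_eq]

theorem fst_eq_of_mem_toWord_of_commute [DecidableEq α] {t : α} {c : FreeGroup α}
    (h : Commute (of t) c) {p : α × Bool} (hp : p ∈ c.toWord) : p.1 = t := by
  obtain ⟨b, hhead, hcomm⟩ :
      ∃ b : Bool, c.toWord.head? ≠ some (t, !b) ∧ Commute (mk [(t, b)]) c := by
    by_cases hc : c.toWord.head? = some (t, false)
    · refine ⟨false, by simp [hc], ?_⟩
      simpa [of, inv_mk, invRev] using h.inv_left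
    · exact ⟨true, hc, h⟩
  have : Nonempty (α × Bool) := ⟨(t, b)⟩
  -- `mk [(t, b)] * c` is reduced as written, while `c * mk [(t, b)]` can only be shorter.
  have hrot : ((t, b) :: c.toWord).rotate 1 = (t, b) :: c.toWord := by
    have hsub := toWord_mul_sublist c (mk [(t, b)])
    rw [hcomm.eq.symm, toWord_mk_singleton_mul hhead, toWord_mk,
      IsReduced.singleton.reduce_eq] at hsub
    simpa using (hsub.eq_of_length (by simp)).symm
  obtain ⟨q, hq⟩ := List.rotate_one_eq_self_iff_eq_replicate.1 hrot
  have htb : (t, b) = q := List.eq_of_mem_replicate (hq ▸ List.mem_cons_self)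
  have hpq : p = q := List.eq_of_mem_replicate (hq ▸ List.mem_cons_of_mem _ hp)
  rw [hpq, ← htb]

theorem not_commute_of_of {i j : α} (hij : i ≠ j) : ¬Commute (of i) (of j) := fun h => by
  classical
  exact hij (fst_eq_of_mem_toWord_of_commute (p := (j, true)) h (by simp [toWord_of])).symm

theorem subsingleton_of_forall_commute {c : FreeGroup α} (hc : c ≠ 1)
    (h : ∀ t, Commute (of t) c) : Subsingleton α := by
  classical
  obtain ⟨p, hp⟩ := List.exists_mem_of_ne_nil _ (mt toWord_eq_nil_iff.1 hc)
  exact ⟨fun s t => (fst_eq_of_mem_toWord_of_commute (h s) hp).symm.trans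
    (fst_eq_of_mem_toWord_of_commute (h t) hp)⟩

instance [Subsingleton α] : IsCyclic (FreeGroup α) := by
  cases isEmpty_or_nonempty α with
  | inl => infer_instance
  | inr hne =>
    have := uniqueOfSubsingleton (Classical.choice hne)
    infer_instance

end FreeGroup

namespace IsFreeGroup

variable {G : Type*} [Group G] [IsFreeGroup G]

theorem isCyclic_of_mem_center {c : G} (hc : c ≠ 1) (hcen : c ∈ center G) : IsCyclic G := by
  let e := toFreeGroup G
  have : Subsingleton (Generators G) :=
    FreeGroup.subsingleton_of_forall_commute (c := e c) (by simpa using hc) fun t => by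
      simpa using (show Commute _ c from mem_center_iff.1 hcen (e.symm (FreeGroup.of t))).map e
  exact isCyclic_of_surjective e.symm e.symm.surjective

theorem isCyclic_centralizer {g : G} (hg : g ≠ 1) : IsCyclic (centralizer {g}) :=
  isCyclic_of_mem_center (c := ⟨g, mem_centralizer_singleton_iff.2 rfl⟩)
    (by simpa [Subtype.ext_iff] using hg)
    (mem_center_iff.2 fun k => Subtype.ext (mem_centralizer_singleton_iff.1 k.2))

theorem commute_trans {g u v : G} (hg : g ≠ 1) (hu : Commute u g) (hv : Commute g v) :
    Commute u v := by
  let := (isCyclic_centralizer hg).commGroup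
  exact congrArg Subtype.val (mul_comm (⟨u, mem_centralizer_singleton_iff.2 hu.eq⟩ :
    centralizer {g}) ⟨v, mem_centralizer_singleton_iff.2 hv.eq.symm⟩)

end IsFreeGroup

theorem commute_sq_of_conj_mem_zpowers {G : Type*} [Group G] [IsMulTorsionFree G] {g z : G}
    (hz : z ≠ 1) (h₁ : g * z * g⁻¹ ∈ zpowers z) (h₂ : g⁻¹ * z * g ∈ zpowers z) :
    Commute (g ^ 2) z := by
  obtain ⟨m, hm⟩ := mem_zpowers_iff.1 h₁
  obtain ⟨n, hn⟩ := mem_zpowers_iff.1 h₂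
  have hconj : ∀ k : ℤ, g * z ^ k * g⁻¹ = z ^ (m * k) := fun k => by
    rw [zpow_mul, hm, ← MulAut.conj_apply, map_zpow, MulAut.conj_apply]
  have hmn : m * n = 1 := by
    have hz' : z ^ (m * n) = z := by rw [← hconj, hn]; group
    have := (IsMulTorsionFree.zpow_eq_one_iff_right hz).1
      (by rw [zpow_sub_one, hz', mul_inv_cancel])
    omega
  have hmm : m * m = 1 := by
    rcases Int.eq_one_or_neg_one_of_mul_eq_one hmn with rfl | rfl <;> rfl
  rw [commute_iff_eq, ← mul_inv_eq_iff_eq_mul, sq]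
  calc g * g * z * (g * g)⁻¹ = g * (g * z ^ (1 : ℤ) * g⁻¹) * g⁻¹ := by group
    _ = z := by rw [hconj, mul_one, hconj, hmm, zpow_one]

namespace FreeGroup

variable {α : Type*}

theorem commute_of_commute_pow_left {g w : FreeGroup α} {n : ℕ} (hn : n ≠ 0)
    (h : Commute (g ^ n) w) : Commute g w := by
  by_cases hg : g ^ n = 1
  · rw [pow_eq_one_iff_left hn] at hg
    exact hg ▸ Commute.one_left w
  · exact IsFreeGroup.commute_trans hg (Commute.self_pow g n) h

theorem commute_of_commute_conj {g w : FreeGroup α} (hw : w ≠ 1)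
    (h : Commute (g * w * g⁻¹) w) : Commute g w := by
  obtain ⟨z, hz⟩ :=
    (centralizer {w}).isCyclic_iff_exists_zpowers_eq_top.1 (IsFreeGroup.isCyclic_centralizer hw)
  have hC : ∀ u, u ∈ zpowers z ↔ Commute u w := fun u => by
    rw [hz, mem_centralizer_singleton_iff, commute_iff_eq, eq_comm]
  have hz1 : z ≠ 1 := by
    rintro rfl
    exact hw (by simpa using (hC w).2 (Commute.refl w))
  have hw' : g * w * g⁻¹ ≠ 1 := by rwa [Ne, conj_eq_one_iff]
  have hzw : Commute z w := (hC z).1 (mem_zpowers z)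
  have h₁ : g * z * g⁻¹ ∈ zpowers z :=
    (hC _).2 (IsFreeGroup.commute_trans hw' (hzw.conj g) h)
  have h₂ : g⁻¹ * z * g ∈ zpowers z :=
    (hC _).2 (by simpa [mul_assoc] using (IsFreeGroup.commute_trans hw hzw h.symm).conj g⁻¹)
  exact commute_of_commute_pow_left two_ne_zero
    (IsFreeGroup.commute_trans hz1 (commute_sq_of_conj_mem_zpowers hz1 h₁ h₂) hzw)

end FreeGroup

open FreeGroup IsFreeGroup in
/-- In a free group `F` whose basis contains two distinct elements `e₁ = of i` and
`e₂ = of j`, a disjunction of two equations is equivalent to the conjunction of four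
commutator equations: for all `x, y ∈ F`,
`x = 1 ∨ y = 1` if and only if `[xᵃ, yᵇ] = 1` for all `a ∈ {e₁, e₁⁻¹}` and
`b ∈ {e₂, e₂⁻¹}`, where `xᵃ = a⁻¹xa` and `[u,v] = u⁻¹v⁻¹uv`. -/
theorem malcev_disjunction {β : Type*} (i j : β) (hij : i ≠ j) (x y : FreeGroup β) :
    (x = 1 ∨ y = 1) ↔
      ∀ a ∈ ({FreeGroup.of i, (FreeGroup.of i)⁻¹} : Set (FreeGroup β)),
        ∀ b ∈ ({FreeGroup.of j, (FreeGroup.of j)⁻¹} : Set (FreeGroup β)),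
          (a⁻¹ * x * a)⁻¹ * (b⁻¹ * y * b)⁻¹ * (a⁻¹ * x * a) * (b⁻¹ * y * b) = 1 := by
  refine ⟨by rintro (rfl | rfl) a - b - <;> group, fun h => ?_⟩
  by_contra! ⟨hx, hy⟩
  have hcomm (a) (ha) (b) (hb) : Commute (a⁻¹ * x * a) (b⁻¹ * y * b) :=
    Commute.inv_inv_iff.1 <| commutatorElement_eq_one_iff_commute.1 <| by
      simpa [commutatorElement_def] using h a ha b hb
  set a := of i
  set b := of j
  have hu : a⁻¹ * x * a ≠ 1 := by simpa using conj_eq_one_iff (a := a⁻¹).not.2 hx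
  have hv : b⁻¹ * y * b ≠ 1 := by simpa using conj_eq_one_iff (a := b⁻¹).not.2 hy
  have h₁₁ := hcomm a (by simp) b (by simp)
  have h₁₂ : Commute (a⁻¹ * x * a) (b ^ 2 * (b⁻¹ * y * b) * (b ^ 2)⁻¹) := by
    simpa [sq, mul_assoc] using hcomm a (by simp) b⁻¹ (by simp)
  have h₂₁ : Commute (a ^ 2 * (a⁻¹ * x * a) * (a ^ 2)⁻¹) (b⁻¹ * y * b) := by
    simpa [sq, mul_assoc] using hcomm a⁻¹ (by simp) b (by simp)
  have ha : Commute (a ^ 2) (a⁻¹ * x * a) :=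
    commute_of_commute_conj hu (commute_trans hv h₂₁ h₁₁.symm)
  have hb : Commute (b ^ 2) (b⁻¹ * y * b) :=
    commute_of_commute_conj hv (commute_trans hu h₁₂.symm h₁₁)
  have hab : Commute (a ^ 2) (b ^ 2) := commute_trans hv (commute_trans hu ha h₁₁) hb.symm
  have hab' : Commute a (b ^ 2) := commute_of_commute_pow_left two_ne_zero hab
  exact not_commute_of_of hij (commute_of_commute_pow_left two_ne_zero hab'.symm).symm
end

section
/- Let x, y, z be elements of a free group F with x²y²z² = 1. Then x, y, z pairwise commute. -/
/-!
The subgroup `H` generated by `x, y, z` is free (Nielsen–Schreier). If it had two distinct free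
generators, sending them to `(1, 0, 0)` and `(0, 1, 0)` would map `H` onto the non-abelian
Heisenberg group with centre reduced mod 2. In that group `p² q² r² = 1` forces `r ≡ (pq)⁻¹`
modulo the centre, after which the central coordinate of `p² q² r²` is the commutator pairing of
`p` and `q` mod 2; so `p, q, r` commute pairwise. The images of the generators `x, y, z` of `H`,
and with them the whole image, would then commute. Hence `H` has at most one free generator and
is abelian.
-/

open Subgroup

/-- The integer Heisenberg group with its centre reduced mod 2: `⟨a, b, c⟩` is the unitriangular
matrix `[[1, a, c], [0, 1, b], [0, 0, 1]]` with `c` read mod 2. -/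
@[ext]
structure HeisenbergModTwo where
  a : ℤ
  b : ℤ
  c : ZMod 2

namespace HeisenbergModTwo

instance : Mul HeisenbergModTwo :=
  ⟨fun p q => ⟨p.a + q.a, p.b + q.b, p.c + q.c + (p.a * q.b : ℤ)⟩⟩
instance : One HeisenbergModTwo := ⟨⟨0, 0, 0⟩⟩
instance : Inv HeisenbergModTwo := ⟨fun p => ⟨-p.a, -p.b, (p.a * p.b : ℤ) - p.c⟩⟩

@[simp] lemma mul_a (p q : HeisenbergModTwo) : (p * q).a = p.a + q.a := rfl
@[simp] lemma mul_b (p q : HeisenbergModTwo) : (p * q).b = p.b + q.b := rfl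
@[simp] lemma mul_c (p q : HeisenbergModTwo) : (p * q).c = p.c + q.c + (p.a * q.b : ℤ) := rfl
@[simp] lemma one_a : (1 : HeisenbergModTwo).a = 0 := rfl
@[simp] lemma one_b : (1 : HeisenbergModTwo).b = 0 := rfl
@[simp] lemma one_c : (1 : HeisenbergModTwo).c = 0 := rfl
@[simp] lemma inv_a (p : HeisenbergModTwo) : p⁻¹.a = -p.a := rfl
@[simp] lemma inv_b (p : HeisenbergModTwo) : p⁻¹.b = -p.b := rfl
@[simp] lemma inv_c (p : HeisenbergModTwo) : p⁻¹.c = (p.a * p.b : ℤ) - p.c := rfl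

instance : Group HeisenbergModTwo where
  mul_assoc p q r := by ext <;> simp only [mul_a, mul_b, mul_c] <;> push_cast <;> ring
  one_mul p := by ext <;> simp
  mul_one p := by ext <;> simp
  inv_mul_cancel p := by
    ext <;> simp only [mul_a, mul_b, mul_c, inv_a, inv_b, inv_c, one_a, one_b, one_c] <;>
      push_cast <;> ring

lemma commute_iff {p q : HeisenbergModTwo} :
    Commute p q ↔ ((p.a * q.b : ℤ) : ZMod 2) = (q.a * p.b : ℤ) := by
  rw [Commute, SemiconjBy, HeisenbergModTwo.ext_iff]
  simp only [mul_a, mul_b, mul_c]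
  constructor
  · rintro ⟨-, -, h⟩
    linear_combination h
  · intro h
    refine ⟨add_comm _ _, add_comm _ _, ?_⟩
    rw [h]
    ring

lemma not_commute_mk_one_zero_mk_zero_one :
    ¬ Commute (⟨1, 0, 0⟩ : HeisenbergModTwo) ⟨0, 1, 0⟩ := by
  rw [commute_iff]
  decide

theorem commute_of_sq_mul_sq_mul_sq_eq_one {p q r : HeisenbergModTwo}
    (h : p ^ 2 * q ^ 2 * r ^ 2 = 1) : Commute p q ∧ Commute p r ∧ Commute q r := by
  obtain ⟨ha, hb, hc⟩ := HeisenbergModTwo.ext_iff.1 h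
  simp only [pow_two, mul_a, mul_b, mul_c, one_a, one_b, one_c] at ha hb hc
  have hra : r.a = -(p.a + q.a) := by omega
  have hrb : r.b = -(p.b + q.b) := by omega
  simp only [commute_iff, hra, hrb] at hc ⊢
  push_cast at hc ⊢
  -- mod 2, `hc` reads `p.a * q.b = q.a * p.b`, and so do the commutator conditions involving `r`
  refine ⟨?_, ?_, ?_⟩ <;> (linear_combination (norm := ring_nf) hc; reduce_mod_char)

end HeisenbergModTwo

lemma Subgroup.commute_of_mem_closure {G : Type*} [Group G] {S : Set G}
    (hS : S.Pairwise Commute) {a b : G} (ha : a ∈ closure S) (hb : b ∈ closure S) :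
    Commute a b := by
  have hS' : ∀ s ∈ S, ∀ t ∈ S, s * t = t * s := fun s hs t ht =>
    (eq_or_ne s t).elim (fun hst => hst ▸ Commute.refl s) (hS hs ht)
  exact Set.centralizer_centralizer_comm_of_comm hS' _
    (closure_le_centralizer_centralizer S ha) _ (closure_le_centralizer_centralizer S hb)

lemma IsFreeGroup.closure_range_of (G : Type*) [Group G] [IsFreeGroup G] :
    closure (Set.range (IsFreeGroup.of : IsFreeGroup.Generators G → G)) = ⊤ := by
  have h := congrArg (map (IsFreeGroup.mulEquiv G).toMonoidHom)
    (FreeGroup.closure_range_of (IsFreeGroup.Generators G))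
  rwa [MonoidHom.map_closure, ← Set.range_comp,
    map_top_of_surjective _ (IsFreeGroup.mulEquiv G).surjective] at h

namespace IsFreeGroup

variable {G : Type*} [Group G] [IsFreeGroup G]

lemma commute_of_sq_mul_sq_mul_sq_eq_one {x y z : G} (hgen : closure {x, y, z} = ⊤)
    (h : x ^ 2 * y ^ 2 * z ^ 2 = 1) (a b : G) : Commute a b := by
  suffices hgens : ∀ k k' : Generators G, k = k' by
    refine commute_of_mem_closure ?_ (closure_range_of G ▸ mem_top a)
      (closure_range_of G ▸ mem_top b)
    rintro _ ⟨k, rfl⟩ _ ⟨k', rfl⟩ -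
    rw [hgens k k']
  classical
  intro k k'
  by_contra hne
  let φ : G →* HeisenbergModTwo := lift fun j => if j = k then ⟨1, 0, 0⟩ else ⟨0, 1, 0⟩
  obtain ⟨hxy, hxz, hyz⟩ :=
    HeisenbergModTwo.commute_of_sq_mul_sq_mul_sq_eq_one (by simpa using congrArg φ h)
  have hpair : ({φ x, φ y, φ z} : Set HeisenbergModTwo).Pairwise Commute := by
    simp [Set.pairwise_insert, hxy, hxz, hyz, hxy.symm, hxz.symm, hyz.symm]
  have hmem (g : G) : φ g ∈ closure {φ x, φ y, φ z} := by
    have := mem_map_of_mem φ (hgen ▸ mem_top g : g ∈ closure {x, y, z})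
    rwa [MonoidHom.map_closure, Set.image_insert_eq, Set.image_insert_eq,
      Set.image_singleton] at this
  have hk := commute_of_mem_closure hpair (hmem (of k)) (hmem (of k'))
  rw [lift_of, lift_of, if_pos rfl, if_neg (Ne.symm hne)] at hk
  exact HeisenbergModTwo.not_commute_mk_one_zero_mk_zero_one hk

end IsFreeGroup

/-- Lyndon–Schützenberger: if `x² y² z² = 1` in a free group, then `x`, `y`, `z`
pairwise commute. -/
theorem free_group_sq_sq_sq_eq_one_commute {β : Type*} (x y z : FreeGroup β)
    (h : x ^ 2 * y ^ 2 * z ^ 2 = 1) :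
    x * y = y * x ∧ x * z = z * x ∧ y * z = z * y := by
  let H := closure ({x, y, z} : Set (FreeGroup β))
  let x' : H := ⟨x, subset_closure (by simp)⟩
  let y' : H := ⟨y, subset_closure (by simp)⟩
  let z' : H := ⟨z, subset_closure (by simp)⟩
  have hgen : closure {x', y', z'} = ⊤ := by
    convert closure_closure_coe_preimage (k := ({x, y, z} : Set (FreeGroup β))) using 2
    ext ⟨w, hw⟩
    simp [x', y', z', Subtype.ext_iff]
  have hcomm := IsFreeGroup.commute_of_sq_mul_sq_mul_sq_eq_one hgen (Subtype.ext h)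
  exact ⟨(hcomm x' y').map H.subtype, (hcomm x' z').map H.subtype,
    (hcomm y' z').map H.subtype⟩
end
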